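/- arXiv:0912.2762 — 3 statements merged into one kernel-verified Lean document; each statement's English description precedes it below -/
import Mathlib

section
/- Let q : Z → Z' be an étale map (local homeomorphism) of topological spaces, let F' be a sheaf of k-vector spaces on Z' and let F̃ be a subsheaf of q^{-1}F'. Define Tr_q(F̃, F') as the subsheaf of F' whose sections over an open U' are those f ∈ F'(U') such that for every z' ∈ U', the germ f_{z'} lies in Σ_{z ∈ q^{-1}(z')} F̃_z (sum taken inside F'_{z'} via the canonical identification (q^{-1}F')_z ≅ F'_{q(z)}). Then for every z' ∈ Z', the germ Tr_q(F̃, F')_{z'} equals Σ_{z ∈ q^{-1}(z')} F̃_z. -/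
open CategoryTheory TopologicalSpace Opposite

/-!
STATEMENT 3.  Let `q : Z → Z'` be an étale map (local homeomorphism), `F'` a sheaf of
`k`-vector spaces on `Z'`, and `F̃ ⊆ q⁻¹F'` a subsheaf.  The trace `Tr_q(F̃, F')` is the
subsheaf of `F'` whose sections over `U'` are those `f` with
`f_{z'} ∈ Σ_{z ∈ q⁻¹(z')} F̃_z` for all `z' ∈ U'` (sums of stalks inside `F'_{z'}` via the
canonical identification `(q⁻¹F')_z ≅ F'_{q z}`).  Then the stalk of `Tr_q(F̃, F')` at
any `z'` equals `Σ_{z ∈ q⁻¹(z')} F̃_z`.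

The subsheaf `F̃` of `q⁻¹F'` is encoded by the family `S z ⊆ F'_{q z}` of its stalks,
together with the characteristic property of a subsheaf of the pull-back along the étale
map `q`: every germ in `S z` is the germ of a section of `F'` on a `q`-homeomorphic
neighbourhood whose germs stay in `S` throughout the neighbourhood.
-/

noncomputable section

/-- Transport of a submodule of a stalk along an equality of base points. -/
def transportSubmodule {k : Type} [Field k] {M N : ModuleCat.{0} k} (h : M = N)
    (p : Submodule k M) : Submodule k N := h ▸ p

/-- The sum `Σ_{z ∈ q⁻¹(w)} F̃_z ⊆ F'_w` of the stalks of the subsheaf over a fibre. -/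
def traceSum {k : Type} [Field k] {Z Z' : TopCat.{0}} (q : Z ⟶ Z')
    (F' : TopCat.Presheaf (ModuleCat.{0} k) Z')
    (S : ∀ z : Z, Submodule k (F'.stalk (q z))) (w : Z') : Submodule k (F'.stalk w) :=
  ⨆ (z : Z) (h : q z = w), transportSubmodule (congrArg F'.stalk h) (S z)

section GermsOfSections

variable {k : Type} [Ring k] {X : TopCat.{0}} (F : TopCat.Presheaf (ModuleCat.{0} k) X)

/-- Germs at `x` of the sections of `F` all of whose germs satisfy `P`; for
`P = traceSum q F' S` this is the stalk of `Tr_q(F̃, F')`. -/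
def germsOfSectionsIn (P : ∀ x : X, Submodule k (F.stalk x)) (x : X) :
    Submodule k (F.stalk x) where
  carrier := {e | ∃ (U : Opens X) (hx : x ∈ U) (f : F.obj (op U)),
    F.germ U x hx f = e ∧ ∀ (w : X) (hw : w ∈ U), F.germ U w hw f ∈ P w}
  zero_mem' := ⟨⊤, trivial, 0, by simp, fun w hw => by simp⟩
  add_mem' := by
    rintro a b ⟨U₁, hx₁, f₁, rfl, hP₁⟩ ⟨U₂, hx₂, f₂, rfl, hP₂⟩
    refine ⟨U₁ ⊓ U₂, Opens.mem_inf.mpr ⟨hx₁, hx₂⟩,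
      F.map (homOfLE inf_le_left).op f₁ + F.map (homOfLE inf_le_right).op f₂, ?_, ?_⟩
    · rw [map_add, F.germ_res_apply, F.germ_res_apply]
    · intro w hw
      rw [map_add, F.germ_res_apply, F.germ_res_apply]
      exact add_mem (hP₁ w hw.1) (hP₂ w hw.2)
  smul_mem' := by
    rintro c _ ⟨U, hx, f, rfl, hP⟩
    exact ⟨U, hx, c • f, map_smul .., fun w hw => by
      rw [map_smul]; exact Submodule.smul_mem _ c (hP w hw)⟩

theorem germsOfSectionsIn_le (P : ∀ x : X, Submodule k (F.stalk x)) (x : X) :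
    germsOfSectionsIn F P x ≤ P x := by
  rintro _ ⟨U, hx, f, rfl, hP⟩
  exact hP x hx

end GermsOfSections

section TraceSum

variable {k : Type} [Field k] {Z Z' : TopCat.{0}} (q : Z ⟶ Z')
  (F' : TopCat.Presheaf (ModuleCat.{0} k) Z') (S : ∀ z : Z, Submodule k (F'.stalk (q z)))

theorem mem_traceSum_of_mem {z : Z} {e : F'.stalk (q z)} (he : e ∈ S z) :
    e ∈ traceSum q F' S (q z) :=
  le_iSup₂ (f := fun z' (h : q z' = q z) => transportSubmodule (congrArg F'.stalk h) (S z'))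
    z rfl he

theorem mem_traceSum_of_surjOn {V : Set Z} {U' : Opens Z'} (hsurj : Set.SurjOn q V U')
    (f : F'.obj (op U'))
    (hS : ∀ (w : Z) (_ : w ∈ V) (hw' : q w ∈ U'), F'.germ U' (q w) hw' f ∈ S w)
    (w' : Z') (hw' : w' ∈ U') : F'.germ U' w' hw' f ∈ traceSum q F' S w' := by
  obtain ⟨w, hwV, rfl⟩ := hsurj hw'
  exact mem_traceSum_of_mem q F' S (hS w hwV hw')

theorem traceSum_le_of_le {T : ∀ w : Z', Submodule k (F'.stalk w)} (h : ∀ z, S z ≤ T (q z))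
    (w : Z') : traceSum q F' S w ≤ T w := by
  refine iSup₂_le fun z hz => ?_
  subst hz
  exact h z

end TraceSum

theorem trace_subsheaf_stalk_general {k : Type} [Field k] {Z Z' : TopCat.{0}} (q : Z ⟶ Z')
    (F' : TopCat.Presheaf (ModuleCat.{0} k) Z')
    (S : ∀ z : Z, Submodule k (F'.stalk (q z)))
    -- `S` is the family of stalks of a subsheaf `F̃` of `q⁻¹F'`:
    (hsub : ∀ (z : Z) (e : F'.stalk (q z)), e ∈ S z →
      ∃ (V : Set Z) (U' : Opens Z'), IsOpen V ∧ z ∈ V ∧ Set.BijOn q V U' ∧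
        ∃ (f : F'.obj (op U')) (hz : q z ∈ U'),
          F'.germ U' (q z) hz f = e ∧
          ∀ (w : Z) (_ : w ∈ V) (hw' : q w ∈ U'), F'.germ U' (q w) hw' f ∈ S w)
    (z' : Z') :
    {e : F'.stalk z' |
        ∃ (U' : Opens Z') (hz' : z' ∈ U') (f : F'.obj (op U')),
          F'.germ U' z' hz' f = e ∧
          ∀ (w : Z') (hw : w ∈ U'), F'.germ U' w hw f ∈ traceSum q F' S w} =
      (traceSum q F' S z' : Set (F'.stalk z')) := by
  have hS : ∀ z, S z ≤ germsOfSectionsIn F' (traceSum q F' S) (q z) := by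
    -- `q` maps `V` onto `U'`, so every germ of `f` on `U'` is a germ of `F̃`
    intro z e he
    obtain ⟨V, U', -, -, hbij, f, hz, rfl, hfS⟩ := hsub z e he
    exact ⟨U', hz, f, rfl, mem_traceSum_of_surjOn q F' S hbij.surjOn f hfS⟩
  exact congrArg SetLike.coe <| le_antisymm (germsOfSectionsIn_le F' (traceSum q F' S) z')
    (traceSum_le_of_le q F' S hS z')

/-- The germs at `z'` of sections of the trace subsheaf `Tr_q(F̃, F')`
form exactly the submodule `Σ_{z ∈ q⁻¹(z')} F̃_z` of `F'_{z'}`. -/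
theorem trace_subsheaf_stalk {k : Type} [Field k] {Z Z' : TopCat.{0}} (q : Z ⟶ Z')
    (hq : IsLocalHomeomorph q)
    (F' : TopCat.Presheaf (ModuleCat.{0} k) Z') (hF' : F'.IsSheaf)
    (S : ∀ z : Z, Submodule k (F'.stalk (q z)))
    -- `S` is the family of stalks of a subsheaf `F̃` of `q⁻¹F'`:
    (hsub : ∀ (z : Z) (e : F'.stalk (q z)), e ∈ S z →
      ∃ (V : Set Z) (U' : Opens Z'), IsOpen V ∧ z ∈ V ∧ Set.BijOn q V U' ∧
        ∃ (f : F'.obj (op U')) (hz : q z ∈ U'),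
          F'.germ U' (q z) hz f = e ∧
          ∀ (w : Z) (_ : w ∈ V) (hw' : q w ∈ U'), F'.germ U' (q w) hw' f ∈ S w)
    (z' : Z') :
    {e : F'.stalk z' |
        ∃ (U' : Opens Z') (hz' : z' ∈ U') (f : F'.obj (op U')),
          F'.germ U' z' hz' f = e ∧
          ∀ (w : Z') (hw : w ∈ U'), F'.germ U' w hw f ∈ traceSum q F' S w} =
      (traceSum q F' S z' : Set (F'.stalk z')) :=
  trace_subsheaf_stalk_general q F' S hsub z'

end
end

section
/- Let X be a reduced complex analytic space, f : X → ℂ a holomorphic function with zero set X₀, and let X̃(f) be the closure in X × S¹ of the graph of f/|f| : X ∖ X₀ → S¹, with projection ϖ : X̃(f) → X. Then ϖ^{-1}(X₀) = X₀ × S¹. -/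
open Topology Filter

/-!
STATEMENT 8.  Let `X` be a (reduced) complex analytic manifold — here an open subset of
a complex normed space — and `f : X → ℂ` holomorphic with zero set `X₀` (with `f` nowhere
locally identically zero on `X₀`, so that `f` is open near `X₀`, as in the proof of the
lemma).  Let `X̃(f)` be the closure in `X × S¹` of the graph of
`f/|f| : X ∖ X₀ → S¹`, with projection `ϖ : X̃(f) → X`.  Then `ϖ⁻¹(X₀) = X₀ × S¹`.

We realize `X̃(f)` inside the ambient product as `closure G ∩ (X × ℂ)` where
`G = {(x, f x/|f x|) : x ∈ X, f x ≠ 0}`; the fibre over `X₀` is then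
`closure G ∩ (X₀ × ℂ)`, and the statement reads: this set is exactly `X₀ × S¹`.
-/

/-- The boundary of the oriented real blow-up along `f` is the full
circle bundle `X₀ × S¹` over the zero set `X₀` of `f`. -/
theorem real_blowup_boundary_is_full_circle_bundle
    {E : Type} [NormedAddCommGroup E] [NormedSpace ℂ E]
    (X : Set E) (hX : IsOpen X) (f : E → ℂ) (hf : AnalyticOnNhd ℂ f X)
    (hnc : ∀ x ∈ X, f x = 0 → ¬ (∀ᶠ y in nhds x, f y = 0)) :
    closure ((fun x => (x, f x / (‖f x‖ : ℂ))) '' {x ∈ X | f x ≠ 0}) ∩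
        ({x ∈ X | f x = 0} ×ˢ (Set.univ : Set ℂ)) =
      {x ∈ X | f x = 0} ×ˢ Metric.sphere (0 : ℂ) 1 := by
  ext ⟨x, c⟩
  simp only [Set.mem_inter_iff, Set.mem_prod, Set.mem_setOf_eq, Set.mem_univ, and_true,
    Metric.mem_sphere, dist_zero_right]
  constructor
  · rintro ⟨hcl, hxX, hfx⟩
    refine ⟨⟨hxX, hfx⟩, ?_⟩
    -- the closure is contained in `univ ×ˢ sphere 0 1`
    have hsub : ((fun x => (x, f x / (‖f x‖ : ℂ))) '' {x ∈ X | f x ≠ 0}) ⊆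
        (Set.univ : Set E) ×ˢ Metric.sphere (0 : ℂ) 1 := by
      rintro ⟨y, d⟩ ⟨z, ⟨hzX, hz⟩, h⟩
      obtain ⟨rfl, rfl⟩ := Prod.mk.injEq .. ▸ h
      refine ⟨trivial, ?_⟩
      have hz' : ‖f z‖ ≠ 0 := norm_ne_zero_iff.mpr hz
      have : ‖f z / (‖f z‖ : ℂ)‖ = 1 := by
        rw [norm_div, Complex.norm_real, norm_norm, div_self hz']
      simpa [Metric.mem_sphere, dist_zero_right] using this
    have : closure ((fun x => (x, f x / (‖f x‖ : ℂ))) '' {x ∈ X | f x ≠ 0}) ⊆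
        (Set.univ : Set E) ×ˢ Metric.sphere (0 : ℂ) 1 := by
      apply closure_minimal hsub
      exact isClosed_univ.prod Metric.isClosed_sphere
    simpa using (this hcl).2
  · rintro ⟨⟨hxX, hfx⟩, hc⟩
    refine ⟨?_, hxX, hfx⟩
    -- open mapping: f maps neighborhoods of x to neighborhoods of 0
    have hopen : 𝓝 (f x) ≤ Filter.map f (𝓝 x) :=
      ((hf x hxX).eventually_constant_or_nhds_le_map_nhds).resolve_left
        (by simpa [hfx] using hnc x hxX hfx)
    rw [mem_closure_iff_nhds]
    intro t ht
    -- a basic neighborhood of (x, c)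
    obtain ⟨U, V, hU, hxU, hV, hcV, hUV⟩ := mem_nhds_prod_iff'.mp ht
    -- shrink U inside X
    have hU' : U ∩ X ∈ 𝓝 x := Filter.inter_mem (hU.mem_nhds hxU) (hX.mem_nhds hxX)
    have himg : f '' (U ∩ X) ∈ 𝓝 (0 : ℂ) := by
      rw [← hfx]; exact hopen (Filter.image_mem_map hU')
    obtain ⟨ε, hε, hball⟩ := Metric.mem_nhds_iff.mp himg
    set r : ℝ := ε / 2 with hr
    have hrpos : 0 < r := by positivity
    have hmem : (r : ℂ) * c ∈ Metric.ball (0 : ℂ) ε := by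
      simp only [Metric.mem_ball, dist_zero_right, norm_mul, hc, mul_one, Complex.norm_real,
        Real.norm_eq_abs, abs_of_pos hrpos]
      rw [hr]; linarith
    obtain ⟨z, ⟨hzU, hzX⟩, hz⟩ := hball hmem
    have hcnz : c ≠ 0 := by intro h; rw [h] at hc; simp at hc
    have hznz : f z ≠ 0 := by
      rw [hz]; exact mul_ne_zero (by exact_mod_cast hrpos.ne') hcnz
    have hnorm : ‖f z‖ = r := by
      rw [hz, norm_mul, Complex.norm_real, Real.norm_eq_abs, abs_of_pos hrpos, hc, mul_one]
    have hq : f z / (‖f z‖ : ℂ) = c := by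
      rw [hnorm, hz, mul_comm, mul_div_assoc, div_self (by exact_mod_cast hrpos.ne'), mul_one]
    exact ⟨(z, c), hUV ⟨hzU, hcV⟩, z, ⟨hzX, hznz⟩, by show (z, f z / (‖f z‖ : ℂ)) = (z, c); rw [hq]⟩
end

section
/- A germ f̂ ∈ O_{X̂,0}(*D)/O_{X̂,0} (formal meromorphic functions modulo formal holomorphic functions, D = {t₁⋯t_ℓ = 0} a normal crossing divisor in X = Δⁿ) is convergent (i.e., lies in O_{X,0}(*D)/O_{X,0}) if and only if for every i ∈ {1,…,ℓ}, its class f̂_i in O_{X̂,0}(*D)/O_{X̂,0}(*D(iᶜ)) lies in O_{X,0}(*D)/O_{X,0}(*D(iᶜ)), where D(iᶜ) = ∪_{j≤ℓ, j≠i} D_j. -/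
/-!
STATEMENT 10.  `X = Δⁿ` with coordinates `t₁, …, t_n`, `D = {t₁⋯t_ℓ = 0}`.  A germ in
`O_{X̂,0}(*D)` (formal meromorphic functions) is a Laurent series
`Σ_{ν} c(ν) tᵛ` whose exponents `ν ∈ ℤⁿ` are bounded below (by some `-N`) in the first
`ℓ` coordinates and nonnegative in the remaining ones (`IsFormalMero`); it is convergent
(comes from `O_{X,0}(*D)`) exactly when its coefficients satisfy a majorant bound
(`IsConvergent`).  The class of `c` modulo `O_{X̂,0}` is determined by the coefficients
`c(ν)` with `ν ∉ ℕⁿ`, and the class modulo `O_{X̂,0}(*D(iᶜ))` by the coefficients with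
`ν_i < 0`.  The statement: the class of `c` in `O_{X̂,0}(*D)/O_{X̂,0}` is convergent
(lies in `O_{X,0}(*D)/O_{X,0}`) iff for every `i < ℓ` its class in
`O_{X̂,0}(*D)/O_{X̂,0}(*D(iᶜ))` is convergent (lies in `O_{X,0}(*D)/O_{X,0}(*D(iᶜ))`).
-/

/-- Support condition for the coefficients of a formal meromorphic germ with poles along
`t₁⋯t_ℓ = 0` : exponents bounded below, and nonnegative in the coordinates `i ≥ ℓ`. -/
def IsFormalMero (n ℓ : ℕ) (c : (Fin n → ℤ) → ℂ) : Prop :=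
  ∃ N : ℕ, ∀ ν : Fin n → ℤ, c ν ≠ 0 → ∀ i : Fin n, -(N : ℤ) ≤ ν i ∧ (ℓ ≤ (i : ℕ) → 0 ≤ ν i)

/-- Convergence of a (formal meromorphic) Laurent series, expressed by the standard
majorant condition on its coefficients. -/
def IsConvergent {n : ℕ} (c : (Fin n → ℤ) → ℂ) : Prop :=
  ∃ C ρ : ℝ, 0 < ρ ∧ ∀ ν : Fin n → ℤ, ‖c ν‖ ≤ C * ρ ^ (-(∑ i, ν i))

/-- Auxiliary elementary inequality for integer powers. -/
lemma zpow_aux {a b : ℝ} (ha : 0 < a) (hab : a ≤ b) {m M : ℤ} (hm : m ≤ M) :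
    b ^ m ≤ b ^ M * a⁻¹ ^ M * a ^ m := by
  have hb : 0 < b := ha.trans_le hab
  have h1 : b ^ m = b ^ M * b ^ (m - M) := by
    rw [← zpow_add₀ hb.ne']; ring_nf
  have h2 : b ^ (m - M) ≤ a ^ (m - M) := by
    have hk : (0:ℤ) ≤ M - m := by omega
    have e1 : b ^ (m - M) = (b⁻¹) ^ (M - m) := by
      rw [inv_zpow, ← zpow_neg]; ring_nf
    have e2 : a ^ (m - M) = (a⁻¹) ^ (M - m) := by
      rw [inv_zpow, ← zpow_neg]; ring_nf
    rw [e1, e2]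
    lift M - m to ℕ using hk with k
    rw [zpow_natCast, zpow_natCast]
    exact pow_le_pow_left₀ (by positivity) (inv_anti₀ ha hab) k
  have h3 : a ^ (m - M) = a⁻¹ ^ M * a ^ m := by
    rw [inv_zpow, ← zpow_neg, ← zpow_add₀ ha.ne']; ring_nf
  calc b ^ m = b ^ M * b ^ (m - M) := h1
    _ ≤ b ^ M * a ^ (m - M) := mul_le_mul_of_nonneg_left h2 (by positivity)
    _ = b ^ M * a⁻¹ ^ M * a ^ m := by rw [h3]; ring

theorem formal_convergence_componentwise (n ℓ : ℕ) (hℓn : ℓ ≤ n)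
    (c : (Fin n → ℤ) → ℂ) (hc : IsFormalMero n ℓ c) :
    (∃ c' : (Fin n → ℤ) → ℂ, IsFormalMero n ℓ c' ∧ IsConvergent c' ∧
        ∀ ν : Fin n → ℤ, ¬ (∀ i, 0 ≤ ν i) → c' ν = c ν) ↔
      (∀ i₀ : Fin n, (i₀ : ℕ) < ℓ →
        ∃ c' : (Fin n → ℤ) → ℂ, IsFormalMero n ℓ c' ∧ IsConvergent c' ∧
          ∀ ν : Fin n → ℤ, ν i₀ < 0 → c' ν = c ν) := by
  constructor
  · rintro ⟨c', h1, h2, h3⟩ i₀ _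
    exact ⟨c', h1, h2, fun ν hν => h3 ν fun h => absurd (h i₀) (not_le.2 hν)⟩
  · intro H
    -- choose data for each index
    have H' : ∀ i : Fin n, ∃ c' : (Fin n → ℤ) → ℂ, IsFormalMero n ℓ c' ∧ IsConvergent c' ∧
        ((i : ℕ) < ℓ → ∀ ν : Fin n → ℤ, ν i < 0 → c' ν = c ν) := by
      intro i
      by_cases h : (i : ℕ) < ℓ
      · obtain ⟨c', h1, h2, h3⟩ := H i h
        exact ⟨c', h1, h2, fun _ => h3⟩
      · exact ⟨0, ⟨0, fun ν hν => absurd rfl hν⟩, ⟨0, 1, one_pos, by simp⟩,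
          fun h' => absurd h' h⟩
    choose d hFM hConv hAgree using H'
    choose N hN using hFM
    choose C ρ hρ hbound using hConv
    classical
    set Nmax : ℕ := Finset.univ.sup N with hNmax
    set ρ' : ℝ := ∏ i : Fin n, min 1 (ρ i) with hρ'def
    have hρ'pos : 0 < ρ' := Finset.prod_pos fun i _ => lt_min one_pos (hρ i)
    have hρ'le : ∀ j : Fin n, ρ' ≤ min 1 (ρ j) := by
      intro j
      rw [hρ'def, ← Finset.mul_prod_erase Finset.univ _ (Finset.mem_univ j)]
      have hle1 : (∏ i ∈ Finset.univ.erase j, min 1 (ρ i)) ≤ 1 :=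
        Finset.prod_le_one (fun i _ => le_of_lt (lt_min one_pos (hρ i)))
          (fun i _ => min_le_left _ _)
      calc min 1 (ρ j) * ∏ i ∈ Finset.univ.erase j, min 1 (ρ i)
          ≤ min 1 (ρ j) * 1 := by
            apply mul_le_mul_of_nonneg_left hle1 (le_of_lt (lt_min one_pos (hρ j)))
        _ = min 1 (ρ j) := mul_one _
    set M : ℤ := ((n * Nmax : ℕ) : ℤ) with hMdef
    set K : Fin n → ℝ := fun j => max (C j) 0 * (max 1 (ρ j)) ^ M * (ρ'⁻¹) ^ M with hKdef
    have hKnonneg : ∀ j, 0 ≤ K j := by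
      intro j
      have : (0:ℝ) < max 1 (ρ j) := lt_max_of_lt_left one_pos
      positivity
    set C' : ℝ := ∑ j : Fin n, K j with hC'def
    have hC'nonneg : 0 ≤ C' := Finset.sum_nonneg fun j _ => hKnonneg j
    have hKleC' : ∀ j, K j ≤ C' :=
      fun j => Finset.single_le_sum (fun i _ => hKnonneg i) (Finset.mem_univ j)
    -- the glued function
    set c' : (Fin n → ℤ) → ℂ := fun ν =>
      if h : ∃ i : Fin n, (i : ℕ) < ℓ ∧ ν i < 0 then d h.choose ν else 0 with hc'def
    refine ⟨c', ⟨Nmax, ?_⟩, ⟨C', ρ', hρ'pos, ?_⟩, ?_⟩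
    · -- IsFormalMero
      intro ν hν i
      rw [hc'def] at hν
      simp only at hν
      split_ifs at hν with h
      · have := hN h.choose ν hν i
        refine ⟨le_trans ?_ this.1, this.2⟩
        have : N h.choose ≤ Nmax := Finset.le_sup (Finset.mem_univ _)
        omega
      · exact absurd rfl hν
    · -- IsConvergent
      intro ν
      by_cases hz : c' ν = 0
      · rw [hz]
        simp only [norm_zero]
        positivity
      · rw [hc'def] at hz ⊢
        simp only at hz ⊢
        split_ifs at hz ⊢ with h
        · set j := h.choose
          -- bound on the sum of exponents
          have hlow : ∀ i : Fin n, -(Nmax : ℤ) ≤ ν i := by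
            intro i
            have := (hN j ν hz i).1
            have hle : N j ≤ Nmax := Finset.le_sup (Finset.mem_univ _)
            omega
          have hsum : -(M : ℤ) ≤ ∑ i, ν i := by
            have : (Finset.univ : Finset (Fin n)).sum (fun _ => -(Nmax:ℤ)) ≤ ∑ i, ν i :=
              Finset.sum_le_sum fun i _ => hlow i
            simpa [hMdef, Finset.sum_const, mul_comm] using this
          set m : ℤ := -(∑ i, ν i) with hmdef
          have hmM : m ≤ M := by omega
          have h1 : ‖d j ν‖ ≤ C j * ρ j ^ m := hbound j ν
          have hρj : ρ' ≤ ρ j := le_trans (hρ'le j) (min_le_right _ _)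
          have h2 : ρ j ^ m ≤ (ρ j) ^ M * ρ'⁻¹ ^ M * ρ' ^ m := zpow_aux hρ'pos hρj hmM
          have hρjpos : 0 < ρ j := hρ j
          have h3 : C j * ρ j ^ m ≤ max (C j) 0 * (ρ j ^ M * ρ'⁻¹ ^ M * ρ' ^ m) := by
            calc C j * ρ j ^ m ≤ max (C j) 0 * ρ j ^ m := by
                  apply mul_le_mul_of_nonneg_right (le_max_left _ _) (by positivity)
              _ ≤ max (C j) 0 * (ρ j ^ M * ρ'⁻¹ ^ M * ρ' ^ m) := by
                  apply mul_le_mul_of_nonneg_left h2 (le_max_right _ _)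
          have h4 : max (C j) 0 * (ρ j ^ M * ρ'⁻¹ ^ M * ρ' ^ m) ≤ K j * ρ' ^ m := by
            rw [hKdef]
            have hρjM : ρ j ^ M ≤ (max 1 (ρ j)) ^ M := by
              have hM0 : (0:ℤ) ≤ M := by positivity
              lift M to ℕ using hM0 with M'
              rw [zpow_natCast, zpow_natCast]
              exact pow_le_pow_left₀ hρjpos.le (le_max_right _ _) M'
            have : max (C j) 0 * (ρ j ^ M * ρ'⁻¹ ^ M * ρ' ^ m)
                = (max (C j) 0 * ρ j ^ M * ρ'⁻¹ ^ M) * ρ' ^ m := by ring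
            rw [this]
            apply mul_le_mul_of_nonneg_right _ (by positivity)
            apply mul_le_mul_of_nonneg_right _ (by positivity)
            exact mul_le_mul_of_nonneg_left hρjM (le_max_right _ _)
          have h5 : K j * ρ' ^ m ≤ C' * ρ' ^ m :=
            mul_le_mul_of_nonneg_right (hKleC' j) (by positivity)
          calc ‖d j ν‖ ≤ C j * ρ j ^ m := h1
            _ ≤ max (C j) 0 * (ρ j ^ M * ρ'⁻¹ ^ M * ρ' ^ m) := h3
            _ ≤ K j * ρ' ^ m := h4
            _ ≤ C' * ρ' ^ m := h5
        · exact absurd rfl hz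
    · -- agreement
      intro ν hν
      rw [hc'def]
      simp only
      split_ifs with h
      · exact hAgree h.choose h.choose_spec.1 ν h.choose_spec.2
      · -- c ν = 0 here
        by_contra hne
        have hne' : c ν ≠ 0 := fun h0 => hne (h0 ▸ rfl)
        obtain ⟨N₀, hN₀⟩ := hc
        apply hν
        intro i
        by_cases hi : (i : ℕ) < ℓ
        · by_contra hneg
          exact h ⟨i, hi, not_le.1 hneg⟩
        · exact (hN₀ ν hne' i).2 (not_lt.1 hi)
end
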